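/- arXiv:0910.5074 — 7 statements merged into one kernel-verified Lean document; each statement's English description precedes it below -/
import Mathlib

section
/- Let a : ℕ × ℕ → ℝ be a finitely supported function with a(0,0) = 0, and let L, u, v be nonzero real numbers. Suppose that (i) L + Σ_{(p,q)} a(p,q)·u^p·v^q = 0, (ii) Σ_{(p,q)} p·a(p,q)·u^p·v^q = 0, and (iii) Σ_{(p,q)} q·a(p,q)·u^p·v^q = 0 (all sums over the support of a). Then there exist at least two distinct pairs (p,q) ∈ ℕ × ℕ with a(p,q) ≠ 0. -/
/-- The vacuum equations force at least two nonzero coefficients: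
if `a : ℕ × ℕ →₀ ℝ` with `a (0,0) = 0`, and nonzero reals `L, u, v` satisfy
`L + ∑ a(p,q) u^p v^q = 0`, `∑ p a(p,q) u^p v^q = 0`, `∑ q a(p,q) u^p v^q = 0`,
then there are at least two distinct pairs `(p,q)` with `a (p,q) ≠ 0`. -/
theorem at_least_two_nonzero_coefficients
    (a : (ℕ × ℕ) →₀ ℝ) (ha00 : a (0, 0) = 0)
    (L u v : ℝ) (hL : L ≠ 0) (hu : u ≠ 0) (hv : v ≠ 0)
    (h1 : L + ∑ pq ∈ a.support, a pq * u ^ pq.1 * v ^ pq.2 = 0)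
    (h2 : ∑ pq ∈ a.support, (pq.1 : ℝ) * a pq * u ^ pq.1 * v ^ pq.2 = 0)
    (h3 : ∑ pq ∈ a.support, (pq.2 : ℝ) * a pq * u ^ pq.1 * v ^ pq.2 = 0) :
    ∃ pq₁ pq₂ : ℕ × ℕ, pq₁ ≠ pq₂ ∧ a pq₁ ≠ 0 ∧ a pq₂ ≠ 0 := by
  -- the support is nonempty, otherwise L = 0
  have hne : a.support.Nonempty := by
    by_contra h
    rw [Finset.not_nonempty_iff_eq_empty] at h
    rw [h, Finset.sum_empty, add_zero] at h1
    exact hL h1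
  obtain ⟨pq, hpq⟩ := hne
  by_cases hsingle : ∀ pq' ∈ a.support, pq' = pq
  · -- support = {pq}
    have hs : a.support = {pq} := by
      apply Finset.eq_singleton_iff_unique_mem.mpr
      exact ⟨hpq, hsingle⟩
    rw [hs, Finset.sum_singleton] at h1 h2 h3
    have hapq : a pq ≠ 0 := Finsupp.mem_support_iff.mp hpq
    have ht : a pq * u ^ pq.1 * v ^ pq.2 ≠ 0 := by positivity
    have hp0 : pq.1 = 0 := by
      rcases mul_eq_zero.mp (by linarith [h2] : (pq.1 : ℝ) * (a pq * u ^ pq.1 * v ^ pq.2) = 0) with h | h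
      · exact_mod_cast h
      · exact absurd h ht
    have hq0 : pq.2 = 0 := by
      rcases mul_eq_zero.mp (by linarith [h3] : (pq.2 : ℝ) * (a pq * u ^ pq.1 * v ^ pq.2) = 0) with h | h
      · exact_mod_cast h
      · exact absurd h ht
    have : pq = (0, 0) := Prod.ext hp0 hq0
    rw [this, ha00] at hapq
    exact absurd rfl hapq
  · push_neg at hsingle
    obtain ⟨pq', hpq', hne'⟩ := hsingle
    exact ⟨pq', pq, hne', Finsupp.mem_support_iff.mp hpq', Finsupp.mem_support_iff.mp hpq⟩
end

section
/- Let L, u, v, a₁, a₂ be nonzero real numbers and let p₁, q₁, p₂, q₂ be natural numbers with p₁ ≥ 1, q₁ ≥ 1, p₂ ≥ 1, q₂ ≥ 1 and (p₁,q₁) ≠ (p₂,q₂). Suppose that L + a₁·u^{p₁}·v^{q₁} + a₂·u^{p₂}·v^{q₂} = 0, p₁·a₁·u^{p₁}·v^{q₁} + p₂·a₂·u^{p₂}·v^{q₂} = 0, and q₁·a₁·u^{p₁}·v^{q₁} + q₂·a₂·u^{p₂}·v^{q₂} = 0. Then p₁·q₂ = p₂·q₁, p₁ ≠ p₂, q₁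 ≠ q₂, and moreover a₁·u^{p₁}·v^{q₁}·((p₁ : ℝ) − (p₂ : ℝ)) = (p₂ : ℝ)·L and a₂·u^{p₂}·v^{q₂}·((p₂ : ℝ) − (p₁ : ℝ)) = (p₁ : ℝ)·L. -/
/-- The first `k₀ = 2` case: both exponent pairs have positive entries. The vacuum
equations force `p₁ q₂ = p₂ q₁`, `p₁ ≠ p₂`, `q₁ ≠ q₂`, and the explicit formulas
(F1), (F2) for the coefficients. -/
theorem first_case_k0_eq_two
    (L u v a₁ a₂ : ℝ) (hL : L ≠ 0) (hu : u ≠ 0) (hv : v ≠ 0)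
    (ha₁ : a₁ ≠ 0) (ha₂ : a₂ ≠ 0)
    (p₁ q₁ p₂ q₂ : ℕ) (hp₁ : 1 ≤ p₁) (hq₁ : 1 ≤ q₁) (hp₂ : 1 ≤ p₂) (hq₂ : 1 ≤ q₂)
    (hne : (p₁, q₁) ≠ (p₂, q₂))
    (h1 : L + a₁ * u ^ p₁ * v ^ q₁ + a₂ * u ^ p₂ * v ^ q₂ = 0)
    (h2 : (p₁ : ℝ) * a₁ * u ^ p₁ * v ^ q₁ + (p₂ : ℝ) * a₂ * u ^ p₂ * v ^ q₂ = 0)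
    (h3 : (q₁ : ℝ) * a₁ * u ^ p₁ * v ^ q₁ + (q₂ : ℝ) * a₂ * u ^ p₂ * v ^ q₂ = 0) :
    p₁ * q₂ = p₂ * q₁ ∧ p₁ ≠ p₂ ∧ q₁ ≠ q₂ ∧
      a₁ * u ^ p₁ * v ^ q₁ * ((p₁ : ℝ) - (p₂ : ℝ)) = (p₂ : ℝ) * L ∧
      a₂ * u ^ p₂ * v ^ q₂ * ((p₂ : ℝ) - (p₁ : ℝ)) = (p₁ : ℝ) * L := by
  have hA : a₁ * u ^ p₁ * v ^ q₁ ≠ 0 :=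
    mul_ne_zero (mul_ne_zero ha₁ (pow_ne_zero _ hu)) (pow_ne_zero _ hv)
  have key : ((p₁ : ℝ) * q₂ - (p₂ : ℝ) * q₁) * (a₁ * u ^ p₁ * v ^ q₁) = 0 := by
    linear_combination (q₂ : ℝ) * h2 - (p₂ : ℝ) * h3
  have hpq : (p₁ : ℝ) * q₂ = (p₂ : ℝ) * q₁ := by
    have := (mul_eq_zero.mp key).resolve_right hA
    linarith
  have hpqN : p₁ * q₂ = p₂ * q₁ := by exact_mod_cast hpq
  have hpne : p₁ ≠ p₂ := by
    intro h
    subst h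
    have : q₂ = q₁ := Nat.eq_of_mul_eq_mul_left (by omega) hpqN
    exact hne (by simp [this])
  have hqne : q₁ ≠ q₂ := by
    intro h
    subst h
    have : p₁ = p₂ := Nat.eq_of_mul_eq_mul_right (by omega) hpqN
    exact hne (by simp [this])
  refine ⟨hpqN, hpne, hqne, ?_, ?_⟩
  · linear_combination h2 - (p₂ : ℝ) * h1
  · linear_combination h2 - (p₁ : ℝ) * h1
end

section
/- Let L, u, v, a₁, a₂ be real numbers with L ≠ 0, u ≠ 0, v ≠ 0, a₁ ≠ 0, a₂ ≠ 0, and let p₁, q₁, p₂, q₂ be natural numbers with p₁ + q₁ ≥ 1, p₂ + q₂ ≥ 1 and (p₁,q₁) ≠ (p₂,q₂). Suppose that L + a₁·u^{p₁}·v^{q₁} + a₂·u^{p₂}·v^{q₂} = 0, p₁·a₁·u^{p₁}·v^{q₁} + p₂·a₂·u^{p₂}·v^{q₂} = 0, and q₁·a₁·u^{p₁}·v^{q₁} + q₂·a₂·u^{p₂}·v^{q₂} = 0. Then exactly one of the following three cases holds: (1) p₁ ≥ 1, p₂ ≥ 1, q₁ ≥ 1, q₂ ≥ 1; (2) q₁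 = 0 and q₂ = 0 (hence p₁ ≥ 1, p₂ ≥ 1, p₁ ≠ p₂); (3) p₁ = 0 and p₂ = 0 (hence q₁ ≥ 1, q₂ ≥ 1, q₁ ≠ q₂). -/
/-- For `k₀ = 2` there are exactly three cases to consider: the vacuum equations
exclude mixed index patterns.  Exactly one of the following holds:
(1) all of `p₁, p₂, q₁, q₂` are at least `1`;
(2) `q₁ = 0` and `q₂ = 0` (hence `p₁ ≥ 1`, `p₂ ≥ 1`, `p₁ ≠ p₂`);
(3) `p₁ = 0` and `p₂ = 0` (hence `q₁ ≥ 1`, `q₂ ≥ 1`, `q₁ ≠ q₂`). -/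
theorem three_cases_k0_eq_two
    (L u v a₁ a₂ : ℝ) (hL : L ≠ 0) (hu : u ≠ 0) (hv : v ≠ 0)
    (ha₁ : a₁ ≠ 0) (ha₂ : a₂ ≠ 0)
    (p₁ q₁ p₂ q₂ : ℕ) (hpq₁ : 1 ≤ p₁ + q₁) (hpq₂ : 1 ≤ p₂ + q₂)
    (hne : (p₁, q₁) ≠ (p₂, q₂))
    (h1 : L + a₁ * u ^ p₁ * v ^ q₁ + a₂ * u ^ p₂ * v ^ q₂ = 0)
    (h2 : (p₁ : ℝ) * a₁ * u ^ p₁ * v ^ q₁ + (p₂ : ℝ) * a₂ * u ^ p₂ * v ^ q₂ = 0)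
    (h3 : (q₁ : ℝ) * a₁ * u ^ p₁ * v ^ q₁ + (q₂ : ℝ) * a₂ * u ^ p₂ * v ^ q₂ = 0) :
    ((1 ≤ p₁ ∧ 1 ≤ p₂ ∧ 1 ≤ q₁ ∧ 1 ≤ q₂) ∧
        ¬(q₁ = 0 ∧ q₂ = 0 ∧ 1 ≤ p₁ ∧ 1 ≤ p₂ ∧ p₁ ≠ p₂) ∧
        ¬(p₁ = 0 ∧ p₂ = 0 ∧ 1 ≤ q₁ ∧ 1 ≤ q₂ ∧ q₁ ≠ q₂)) ∨
    (¬(1 ≤ p₁ ∧ 1 ≤ p₂ ∧ 1 ≤ q₁ ∧ 1 ≤ q₂) ∧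
        (q₁ = 0 ∧ q₂ = 0 ∧ 1 ≤ p₁ ∧ 1 ≤ p₂ ∧ p₁ ≠ p₂) ∧
        ¬(p₁ = 0 ∧ p₂ = 0 ∧ 1 ≤ q₁ ∧ 1 ≤ q₂ ∧ q₁ ≠ q₂)) ∨
    (¬(1 ≤ p₁ ∧ 1 ≤ p₂ ∧ 1 ≤ q₁ ∧ 1 ≤ q₂) ∧
        ¬(q₁ = 0 ∧ q₂ = 0 ∧ 1 ≤ p₁ ∧ 1 ≤ p₂ ∧ p₁ ≠ p₂) ∧
        (p₁ = 0 ∧ p₂ = 0 ∧ 1 ≤ q₁ ∧ 1 ≤ q₂ ∧ q₁ ≠ q₂)) := by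
  have hA : a₁ * u ^ p₁ * v ^ q₁ ≠ 0 :=
    mul_ne_zero (mul_ne_zero ha₁ (pow_ne_zero _ hu)) (pow_ne_zero _ hv)
  have hB : a₂ * u ^ p₂ * v ^ q₂ ≠ 0 :=
    mul_ne_zero (mul_ne_zero ha₂ (pow_ne_zero _ hu)) (pow_ne_zero _ hv)
  -- zero patterns transfer between the two terms
  have hq12 : q₁ = 0 → q₂ = 0 := by
    intro h; subst h
    have : (q₂ : ℝ) * (a₂ * u ^ p₂ * v ^ q₂) = 0 := by push_cast at h3 ⊢; linarith
    rcases mul_eq_zero.1 this with h | h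
    · exact_mod_cast h
    · exact absurd h hB
  have hq21 : q₂ = 0 → q₁ = 0 := by
    intro h; subst h
    have : (q₁ : ℝ) * (a₁ * u ^ p₁ * v ^ q₁) = 0 := by push_cast at h3 ⊢; linarith
    rcases mul_eq_zero.1 this with h | h
    · exact_mod_cast h
    · exact absurd h hA
  have hp12 : p₁ = 0 → p₂ = 0 := by
    intro h; subst h
    have : (p₂ : ℝ) * (a₂ * u ^ p₂ * v ^ q₂) = 0 := by push_cast at h2 ⊢; linarith
    rcases mul_eq_zero.1 this with h | h
    · exact_mod_cast h
    · exact absurd h hB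
  have hp21 : p₂ = 0 → p₁ = 0 := by
    intro h; subst h
    have : (p₁ : ℝ) * (a₁ * u ^ p₁ * v ^ q₁) = 0 := by push_cast at h2 ⊢; linarith
    rcases mul_eq_zero.1 this with h | h
    · exact_mod_cast h
    · exact absurd h hA
  rcases Nat.eq_zero_or_pos p₁ with hp1 | hp1
  · have hp2 := hp12 hp1
    have hq1 : 1 ≤ q₁ := by omega
    have hq2 : 1 ≤ q₂ := by omega
    have hqq : q₁ ≠ q₂ := by
      intro h; exact hne (by simp [hp1, hp2, h])
    exact Or.inr (Or.inr ⟨by omega, by omega, hp1, hp2, hq1, hq2, hqq⟩)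
  · rcases Nat.eq_zero_or_pos q₁ with hq1 | hq1
    · have hq2 := hq12 hq1
      have hp2 : 1 ≤ p₂ := by
        rcases Nat.eq_zero_or_pos p₂ with h | h
        · exact absurd (hp21 h) (by omega)
        · exact h
      have hpp : p₁ ≠ p₂ := by
        intro h; exact hne (by simp [hq1, hq2, h])
      exact Or.inr (Or.inl ⟨by omega, ⟨hq1, hq2, hp1, hp2, hpp⟩, by omega⟩)
    · have hp2 : 1 ≤ p₂ := by
        rcases Nat.eq_zero_or_pos p₂ with h | h
        · exact absurd (hp21 h) (by omega)
        · exact h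
      have hq2 : 1 ≤ q₂ := by
        rcases Nat.eq_zero_or_pos q₂ with h | h
        · exact absurd (hq21 h) (by omega)
        · exact h
      exact Or.inl ⟨⟨hp1, hp2, hq1, hq2⟩, by omega, by omega⟩
end

section
/- Let p₁, q₁, p₂, q₂ be natural numbers with p₁ + q₁ ≥ 1, p₂ + q₂ ≥ 1, (p₁,q₁) ≠ (p₂,q₂), p₁·q₂ = p₂·q₁, and (q₁,q₂) ≠ (0,0). Then max(p₁ + 4·q₁, p₂ + 4·q₂) ≥ 8, and equality max(p₁ + 4·q₁, p₂ + 4·q₂) = 8 holds if and only if the unordered pair {(p₁,q₁), (p₂,q₂)} equals {(0,1), (0,2)}. -/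
/-- Dimension counting for the minimal super-theory in the case `k₀ = 2`:
under the constraints `p₁ + q₁ ≥ 1`, `p₂ + q₂ ≥ 1`, `(p₁,q₁) ≠ (p₂,q₂)`,
`p₁ q₂ = p₂ q₁`, `(q₁,q₂) ≠ (0,0)`, the added dimension
`max (p₁ + 4 q₁) (p₂ + 4 q₂)` is at least `8`, with equality exactly for the
unordered pair `{(0,1), (0,2)}`. -/
theorem minimal_dimension_eight
    (p₁ q₁ p₂ q₂ : ℕ) (hpq₁ : 1 ≤ p₁ + q₁) (hpq₂ : 1 ≤ p₂ + q₂)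
    (hne : (p₁, q₁) ≠ (p₂, q₂)) (hcompat : p₁ * q₂ = p₂ * q₁)
    (hq : (q₁, q₂) ≠ (0, 0)) :
    8 ≤ max (p₁ + 4 * q₁) (p₂ + 4 * q₂) ∧
    (max (p₁ + 4 * q₁) (p₂ + 4 * q₂) = 8 ↔
      ((p₁, q₁) = (0, 1) ∧ (p₂, q₂) = (0, 2)) ∨
      ((p₁, q₁) = (0, 2) ∧ (p₂, q₂) = (0, 1))) := by
  simp only [Prod.mk.injEq, ne_eq, not_and_or] at hne hq ⊢
  constructor
  · by_contra h
    push_neg at h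
    have h1 : p₁ + 4 * q₁ ≤ 7 := by omega
    have h2 : p₂ + 4 * q₂ ≤ 7 := by omega
    have hq1 : q₁ ≤ 1 := by omega
    have hq2 : q₂ ≤ 1 := by omega
    interval_cases q₁ <;> interval_cases q₂ <;> omega
  · constructor
    · intro h
      have h1 : p₁ + 4 * q₁ ≤ 8 := by omega
      have h2 : p₂ + 4 * q₂ ≤ 8 := by omega
      have hq1 : q₁ ≤ 2 := by omega
      have hq2 : q₂ ≤ 2 := by omega
      interval_cases q₁ <;> interval_cases q₂ <;> omega
    · rintro (⟨⟨h1, h2⟩, h3, h4⟩ | ⟨⟨h1, h2⟩, h3, h4⟩) <;> subst h1 h2 h3 h4 <;> simp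
end

section
/- Work in the polynomial ring MvPolynomial (Fin 5) ℝ with weight function w : Fin 5 → ℕ given by w(0) = 1, w(1) = 1, w(2) = 4, w(3) = 4, w(4) = 4. Let P, F be polynomials such that every monomial in the support of P and every monomial in the support of F has exponent 0 on the variables 1, 3, and 4. Suppose the weighted total degree of F with respect to w is at most 4, and let c be a nonzero real number. Then the weighted total degree with respect to w of the polynomial P + F·X₃ + c·X₃², where X₃ denotes the variable of index 3, equals max(weighted total degree of P with respect to w, 8). -/
open MvPolynomial

/-- With weights `w = (1, 1, 4, 4, 4)` on the five variables `φ', φ'', X', X'', Y`,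
if `P` and `F` involve only the variables of index `0` and `2`, and the weighted
total degree of `F` is at most `4`, then for any nonzero constant `c` the
Lagrangian `P + F·X₃ + c·X₃²` has weighted total degree
`max (weightedTotalDegree w P) 8`. -/
theorem minimal_super_theory_degree
    (w : Fin 5 → ℕ) (hw : w = ![1, 1, 4, 4, 4])
    (P F : MvPolynomial (Fin 5) ℝ)
    (hP : ∀ d ∈ P.support, d 1 = 0 ∧ d 3 = 0 ∧ d 4 = 0)
    (hF : ∀ d ∈ F.support, d 1 = 0 ∧ d 3 = 0 ∧ d 4 = 0)
    (hFdeg : weightedTotalDegree w F ≤ 4)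
    (c : ℝ) (hc : c ≠ 0) :
    weightedTotalDegree w (P + F * X 3 + C c * X 3 ^ 2) =
      max (weightedTotalDegree w P) 8 := by
  subst hw
  set w : Fin 5 → ℕ := ![1, 1, 4, 4, 4] with hw
  have hw3 : w 3 = 4 := rfl
  set Q := P + F * X 3 + C c * X 3 ^ 2 with hQ
  have hmono : (C c * X 3 ^ 2 : MvPolynomial (Fin 5) ℝ)
      = monomial (Finsupp.single 3 2) c := by
    rw [C_mul_X_pow_eq_monomial]
  have hwsingle : Finsupp.weight w (Finsupp.single (3 : Fin 5) 2) = 8 := by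
    simp [Finsupp.weight_apply, hw3]
  -- coefficient computations
  have hcP : coeff (Finsupp.single 3 2) P = 0 := by
    by_contra h
    have := (hP _ (mem_support_iff.mpr h)).2.1
    simp at this
  have hcF : coeff (Finsupp.single 3 2) (F * X 3) = 0 := by
    classical
    rw [coeff_mul_X']
    rw [if_pos (by simp)]
    have : (Finsupp.single (3:Fin 5) 2 - Finsupp.single 3 1) = Finsupp.single 3 1 := by
      ext i; rcases eq_or_ne i 3 with rfl | h; · simp;
      · simp [Finsupp.single_apply, Ne.symm h]
    rw [this]
    by_contra h
    have := (hF _ (mem_support_iff.mpr h)).2.1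
    simp at this
  have hcQ : coeff (Finsupp.single 3 2) Q = c := by
    rw [hQ, coeff_add, coeff_add, hcP, hcF, hmono, coeff_monomial, if_pos rfl]
    ring
  -- lower bound: 8
  have h8 : 8 ≤ weightedTotalDegree w Q := by
    have := le_weightedTotalDegree w (φ := Q)
      (mem_support_iff.mpr (by rw [hcQ]; exact hc))
    rwa [hwsingle] at this
  -- lower bound: deg P
  have hPle : weightedTotalDegree w P ≤ weightedTotalDegree w Q := by
    rcases eq_or_ne P 0 with rfl | hP0
    · simp [weightedTotalDegree, support_zero]
    · obtain ⟨d, hd, hdeq⟩ := Finset.exists_mem_eq_sup P.support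
        (support_nonempty.mpr hP0) (fun d => Finsupp.weight w d)
      obtain ⟨-, hd3, -⟩ := hP d hd
      have hdF : coeff d (F * X 3) = 0 := by
        classical
        rw [coeff_mul_X', if_neg (by simp [Finsupp.mem_support_iff, hd3])]
      have hdM : coeff d (C c * X 3 ^ 2) = 0 := by
        rw [hmono, coeff_monomial, if_neg]
        intro h
        rw [← h] at hd3
        simp at hd3
      have hdQ : coeff d Q = coeff d P := by
        rw [hQ, coeff_add, coeff_add, hdF, hdM, add_zero, add_zero]
      have hmem : d ∈ Q.support := mem_support_iff.mpr
        (by rw [hdQ]; exact mem_support_iff.mp hd)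
      calc weightedTotalDegree w P = Finsupp.weight w d := hdeq
        _ ≤ weightedTotalDegree w Q := le_weightedTotalDegree w hmem
  -- upper bound
  have hub : weightedTotalDegree w Q ≤ max (weightedTotalDegree w P) 8 := by
    apply Finset.sup_le
    intro d hd
    have hd' := support_add (Finset.mem_coe.mpr hd)
    rw [Finset.mem_union] at hd'
    rcases hd' with hd' | hd'
    · have hd'' := support_add (Finset.mem_coe.mpr hd')
      rw [Finset.mem_union] at hd''
      rcases hd'' with hd'' | hd''
      · exact le_max_of_le_left (le_weightedTotalDegree w hd'')
      · -- d ∈ support (F * X 3)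
        have := support_mul F (X 3) hd''
        rw [Finset.mem_add] at this
        obtain ⟨a, ha, b, hb, rfl⟩ := this
        rw [support_X, Finset.mem_singleton] at hb
        subst hb
        refine le_max_of_le_right ?_
        rw [map_add]
        have h1 : Finsupp.weight w a ≤ 4 := le_trans (le_weightedTotalDegree w ha) hFdeg
        have h2 : Finsupp.weight w (Finsupp.single (3:Fin 5) 1) = 4 := by
          simp [Finsupp.weight_apply, hw3]
        omega
    · rw [hmono] at hd'
      have := support_monomial_subset hd'
      rw [Finset.mem_singleton] at this
      subst this
      exact le_max_of_le_right (hwsingle.le)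
  omega
end

section
/- Let K : ℝ × ℝ → ℝ be a function, let φ₀ and s be real numbers with s ≠ 0, set L₀ = K(φ₀, 0), and let C₁ be a real number. Suppose the function φ ↦ K(φ, 0) is differentiable at φ₀ with derivative 0. Define L : ℝ × ℝ × ℝ → ℝ by L(φ, x, y) = K(φ, x) − 2·(K(φ, x) + C₁·x)·(y/s) + (L₀/s²)·y². Then: (a) L(φ₀, 0, s) = 0; (b) the derivative of the function y ↦ L(φ₀, 0, y) at the point y = s equals 0; and (c) the derivative of the function φ ↦ L(φ, 0, s) at the point φ = φ₀ equals 0. -/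
/-- The general minimal super-theory with `(p₁,q₁) = (0,1)`, `(p₂,q₂) = (0,2)`:
for `L(φ, x, y) = K(φ, x) − 2(K(φ, x) + C₁ x)(y/s) + (L₀/s²) y²` with
`L₀ = K(φ₀, 0)` and `s ≠ 0`, if `φ ↦ K(φ, 0)` has derivative `0` at `φ₀`,
then the vacuum `φ = φ₀`, `x = 0`, `y = s` satisfies `L = 0`, `∂L/∂y = 0`
and `∂L/∂φ = 0`. -/
theorem minimal_super_theory_vacuum
    (K : ℝ × ℝ → ℝ) (φ₀ s : ℝ) (hs : s ≠ 0) (C₁ : ℝ)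
    (L₀ : ℝ) (hL₀ : L₀ = K (φ₀, 0))
    (hK : HasDerivAt (fun φ => K (φ, 0)) 0 φ₀)
    (L : ℝ × ℝ × ℝ → ℝ)
    (hL : ∀ φ x y, L (φ, x, y) =
      K (φ, x) - 2 * (K (φ, x) + C₁ * x) * (y / s) + (L₀ / s ^ 2) * y ^ 2) :
    L (φ₀, 0, s) = 0 ∧
    deriv (fun y => L (φ₀, 0, y)) s = 0 ∧
    deriv (fun φ => L (φ, 0, s)) φ₀ = 0 := by
  refine ⟨?_, ?_, ?_⟩
  · rw [hL, ← hL₀]; field_simp; ring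
  · have heq : (fun y => L (φ₀, 0, y)) =
        fun y => L₀ - 2 * (L₀ + C₁ * 0) * (y / s) + (L₀ / s ^ 2) * y ^ 2 :=
      funext fun y => by rw [hL, ← hL₀]
    rw [heq]
    have h1 := ((hasDerivAt_id s).div_const s).const_mul (2 * (L₀ + C₁ * 0))
    have h2 := (hasDerivAt_pow 2 s).const_mul (L₀ / s ^ 2)
    have h := ((hasDerivAt_const s L₀).sub h1).add h2
    simp only [id_eq] at h
    simp only [Pi.add_def, Pi.sub_def] at h
    rw [h.deriv]
    field_simp
    ring
  · have heq : (fun φ => L (φ, 0, s)) =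
        fun φ => K (φ, 0) - 2 * (K (φ, 0) + C₁ * 0) * (s / s) + (L₀ / s ^ 2) * s ^ 2 :=
      funext fun φ => by rw [hL]
    rw [heq]
    have h := ((hK.sub ((hK.add (hasDerivAt_const φ₀ (C₁ * 0))).const_mul 2 |>.mul_const
      (s / s))).add (hasDerivAt_const φ₀ (L₀ / s ^ 2 * s ^ 2)))
    simp only [Pi.add_def, Pi.sub_def] at h
    rw [h.deriv]
    ring
end

section
/- Let p₁, p₂ be natural numbers with p₁ ≥ 1, p₂ ≥ 1 and p₁ ≠ p₂, let w ≠ 0 and φ₀ be real numbers, let K : ℝ × ℝ → ℝ and G : ℝ × ℝ → ℝ be functions with G(φ₀, 0) = 0, set L₀ = K(φ₀, 0), and let C₁, C₂ : ℝ → ℝ be functions differentiable at φ₀. Suppose the function φ ↦ K(φ, 0) is differentiable at φ₀. Define L : ℝ × ℝ × ℝ × ℝ → ℝ by L(φ, ψ, x, y) = K(φ, x) + (p₂/((p₁:ℝ) − p₂))·(K(φ, x) + C₁(φ)·x)·w^{−p₁}·ψ^{p₁} + (p₁/((p₂:ℝ) − p₁))·(K(φ, x) + C₂(φ)·x)·w^{−p₂}·ψ^{p₂}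 + G(φ, x)·y. Then: (a) L(φ₀, w, 0, 0) = 0; (b) the derivative of the function ψ ↦ L(φ₀, ψ, 0, 0) at the point ψ = w equals 0; (c) the derivative of the function φ ↦ L(φ, w, 0, 0) at the point φ = φ₀ equals 0; and (d) the derivative of the function y ↦ L(φ₀, w, 0, y) at y = 0 equals G(φ₀, 0) = 0. -/
/-- The general minimal super-theory in the case `k₀ = 2`, `k₁ = 1`: for
`L(φ, ψ, x, y) = K(φ,x) + (p₂/(p₁−p₂))(K(φ,x) + C₁(φ)x) w^{−p₁} ψ^{p₁}
 + (p₁/(p₂−p₁))(K(φ,x) + C₂(φ)x) w^{−p₂} ψ^{p₂} + G(φ,x) y`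
with `w ≠ 0` and `G(φ₀, 0) = 0`, the vacuum `φ = φ₀`, `ψ = w`, `x = 0`, `y = 0`
satisfies `L = 0`, `∂L/∂ψ = 0`, `∂L/∂φ = 0` and `∂L/∂y = G(φ₀,0) = 0`. -/
theorem minimal_super_theory_vacuum_k1
    (p₁ p₂ : ℕ) (hp₁ : 1 ≤ p₁) (hp₂ : 1 ≤ p₂) (hne : p₁ ≠ p₂)
    (w φ₀ : ℝ) (hw : w ≠ 0)
    (K G : ℝ × ℝ → ℝ) (hG : G (φ₀, 0) = 0)
    (L₀ : ℝ) (hL₀ : L₀ = K (φ₀, 0))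
    (C₁ C₂ : ℝ → ℝ) (hC₁ : DifferentiableAt ℝ C₁ φ₀) (hC₂ : DifferentiableAt ℝ C₂ φ₀)
    (hK : DifferentiableAt ℝ (fun φ => K (φ, 0)) φ₀)
    (L : ℝ × ℝ × ℝ × ℝ → ℝ)
    (hL : ∀ φ ψ x y, L (φ, ψ, x, y) =
      K (φ, x)
      + ((p₂ : ℝ) / ((p₁ : ℝ) - (p₂ : ℝ))) * (K (φ, x) + C₁ φ * x)
          * w ^ (-(p₁ : ℤ)) * ψ ^ p₁
      + ((p₁ : ℝ) / ((p₂ : ℝ) - (p₁ : ℝ))) * (K (φ, x) + C₂ φ * x)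
          * w ^ (-(p₂ : ℤ)) * ψ ^ p₂
      + G (φ, x) * y) :
    L (φ₀, w, 0, 0) = 0 ∧
    deriv (fun ψ => L (φ₀, ψ, 0, 0)) w = 0 ∧
    deriv (fun φ => L (φ, w, 0, 0)) φ₀ = 0 ∧
    deriv (fun y => L (φ₀, w, 0, y)) 0 = G (φ₀, 0) ∧ G (φ₀, 0) = 0 := by
  have hd : (p₁ : ℝ) - p₂ ≠ 0 := sub_ne_zero.2 (by exact_mod_cast hne)
  have hd' : (p₂ : ℝ) - p₁ ≠ 0 := sub_ne_zero.2 (by exact_mod_cast hne.symm)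
  have hwp₁ : w ^ p₁ ≠ 0 := pow_ne_zero _ hw
  have hwp₂ : w ^ p₂ ≠ 0 := pow_ne_zero _ hw
  -- abbreviate the coefficients of ψ^p₁ and ψ^p₂ at the vacuum x = 0
  set c₁ : ℝ := ((p₂ : ℝ) / ((p₁ : ℝ) - (p₂ : ℝ))) * K (φ₀, 0) * (w ^ p₁)⁻¹ with hc₁
  set c₂ : ℝ := ((p₁ : ℝ) / ((p₂ : ℝ) - (p₁ : ℝ))) * K (φ₀, 0) * (w ^ p₂)⁻¹ with hc₂
  have key : ∀ ψ : ℝ, L (φ₀, ψ, 0, 0) = K (φ₀, 0) + c₁ * ψ ^ p₁ + c₂ * ψ ^ p₂ := by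
    intro ψ
    rw [hL, zpow_neg, zpow_neg, zpow_natCast, zpow_natCast, hc₁, hc₂]
    ring
  have hval : L (φ₀, w, 0, 0) = 0 := by
    rw [key, hc₁, hc₂]
    field_simp
    ring
  refine ⟨hval, ?_, ?_, ?_, hG⟩
  · -- derivative in ψ
    have hfun : (fun ψ => L (φ₀, ψ, 0, 0))
        = fun ψ => K (φ₀, 0) + (c₁ * ψ ^ p₁ + c₂ * ψ ^ p₂) :=
      funext fun ψ => by rw [key]; ring
    have h : HasDerivAt (fun ψ => K (φ₀, 0) + (c₁ * ψ ^ p₁ + c₂ * ψ ^ p₂))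
        (0 + (c₁ * ((p₁ : ℝ) * w ^ (p₁ - 1)) + c₂ * ((p₂ : ℝ) * w ^ (p₂ - 1)))) w :=
      (hasDerivAt_const w (K (φ₀, 0))).add
      (((hasDerivAt_pow p₁ w).const_mul c₁).add ((hasDerivAt_pow p₂ w).const_mul c₂))
    rw [hfun, h.deriv, zero_add, hc₁, hc₂]
    obtain ⟨q₁, rfl⟩ : ∃ q, p₁ = q + 1 := ⟨p₁ - 1, (Nat.succ_pred_eq_of_pos hp₁).symm⟩
    obtain ⟨q₂, rfl⟩ : ∃ q, p₂ = q + 1 := ⟨p₂ - 1, (Nat.succ_pred_eq_of_pos hp₂).symm⟩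
    have hred : ∀ (a b : ℝ) (q : ℕ),
        a * K (φ₀, 0) * (w ^ (q + 1))⁻¹ * (b * w ^ ((q + 1) - 1))
          = a * b * K (φ₀, 0) * w⁻¹ := by
      intro a b q
      have hq : w ^ q ≠ 0 := pow_ne_zero _ hw
      rw [Nat.add_sub_cancel, pow_succ]
      field_simp
    rw [hred, hred]
    push_cast
    rw [show ((q₂ : ℝ) + 1 - ((q₁ : ℝ) + 1)) = -(((q₁ : ℝ) + 1) - ((q₂ : ℝ) + 1)) by ring,
      div_neg]
    ring
  · -- derivative in φ : the function is identically zero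
    have : (fun φ => L (φ, w, 0, 0)) = fun _ => 0 := by
      funext φ
      rw [hL, zpow_neg, zpow_neg, zpow_natCast, zpow_natCast]
      field_simp
      ring
    rw [this, deriv_const]
  · -- derivative in y
    have hfun : (fun y => L (φ₀, w, 0, y)) = fun y => L (φ₀, w, 0, 0) + G (φ₀, 0) * y := by
      funext y
      rw [hL, hL]
      ring
    have hder : HasDerivAt (fun y => L (φ₀, w, 0, 0) + G (φ₀, 0) * y) (G (φ₀, 0)) 0 := by
      simpa [Pi.add_def] using (hasDerivAt_const (0:ℝ) (L (φ₀, w, 0, 0))).add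
        ((hasDerivAt_id (0:ℝ)).const_mul (G (φ₀, 0)))
    rw [hfun, hder.deriv]
end
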